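/- arXiv:2002.01108 — 2 statements merged into one kernel-verified Lean document; each statement's English description precedes it below -/
import Mathlib

section
/- For every ε ∈ (0,1] and N ≥ 2, the spectrum (over ℂ) of P_ε⁻¹L equals {1} ∪ σ(I_J + ε((M⁻¹A₀)^N − εI_J)⁻¹). -/
/-!
Since `P_ε = L - ε E₁ M E_Nᵀ`, we have `P_ε⁻¹ L = I + U V` with `U = ε P_ε⁻¹ E₁ M` of size
`NJ × J` and `V = E_Nᵀ`. The nonzero spectra of `U V` and `V U` agree, and `NJ > J` makes `0` an
eigenvalue of `U V`, so the spectrum is `{1}` together with that of `I + V U`.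
With `S = M⁻¹ A₀`, solving `P_ε X = E₁` blockwise gives
`X_k = S^(N-1-k) (S^N - ε I)⁻¹ M⁻¹`, whence `E_Nᵀ P_ε⁻¹ E₁ M = (S^N - ε I)⁻¹`.

Invertibility of `S^N - ε I` (and thereby of `P_ε`) is an energy estimate: since
`M (S - I) = τ K` is positive definite, `xᵀ M x < (S x)ᵀ M (S x)` for `x ≠ 0`, so
`S^N x = ε x` with `|ε| ≤ 1` forces `x = 0`.
-/

open Matrix

/-- The all-at-once block lower bidiagonal matrix `L` whose `(i,j)`-th `J × J`
block equals `A₀` if `i = j`, `−M` if `i = j + 1`, and `0` otherwise. -/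
def Lmat (N J : ℕ) (A₀ M : Matrix (Fin J) (Fin J) ℝ) :
    Matrix (Fin N × Fin J) (Fin N × Fin J) ℝ :=
  Matrix.of fun p q =>
    if p.1 = q.1 then A₀ p.2 q.2
    else if (p.1 : ℕ) = (q.1 : ℕ) + 1 then -M p.2 q.2 else 0

/-- `E_i = e_i ⊗ I_J`, where `e_i` is the `i`-th standard basis vector of `ℝ^N`. -/
def Emat (N J : ℕ) (i : Fin N) : Matrix (Fin N × Fin J) (Fin J) ℝ :=
  Matrix.of fun p y => if p.1 = i ∧ p.2 = y then 1 else 0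

/-- The block `ε`-circulant preconditioner `P_ε`, agreeing with `L` in every
block except that the top-right `(1,N)`-th `J × J` block equals `−εM`;
equivalently `P_ε = L − ε E₁ M E_Nᵀ`. -/
noncomputable def Pmat (N J : ℕ) (hN : 0 < N) (A₀ M : Matrix (Fin J) (Fin J) ℝ)
    (ε : ℝ) : Matrix (Fin N × Fin J) (Fin N × Fin J) ℝ :=
  Lmat N J A₀ M -
    ε • (Emat N J ⟨0, hN⟩ * M * (Emat N J ⟨N - 1, Nat.sub_lt hN Nat.one_pos⟩)ᵀ)

open Polynomial

section SpectrumMulComm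

variable {K m n : Type*} [Field K] [Fintype m] [Fintype n] [DecidableEq m] [DecidableEq n]

theorem Matrix.spectrum_mul_eq_insert_zero (A : Matrix m n K) (B : Matrix n m K)
    (h : Fintype.card n < Fintype.card m) :
    spectrum K (A * B) = insert 0 (spectrum K (B * A)) := by
  ext z
  simp only [mem_spectrum_iff_isRoot_charpoly, charpoly_mul_comm_of_le A B h.le,
    Set.mem_insert_iff, IsRoot.def, eval_mul, eval_pow, eval_X, mul_eq_zero,
    pow_eq_zero_iff (Nat.sub_ne_zero_of_lt h)]

theorem Matrix.spectrum_one_add_mul (A : Matrix m n K) (B : Matrix n m K)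
    (h : Fintype.card n < Fintype.card m) :
    spectrum K (1 + A * B) = {1} ∪ spectrum K (1 + B * A) := by
  rw [← map_one (algebraMap K (Matrix m m K)), ← map_one (algebraMap K (Matrix n n K)),
    ← spectrum.vadd_eq, ← spectrum.vadd_eq, spectrum_mul_eq_insert_zero A B h,
    Set.vadd_set_insert, vadd_eq_add, add_zero, Set.singleton_union]

end SpectrumMulComm

theorem Matrix.map_one_add_mul {R S m n : Type*} [Semiring R] [Semiring S] [Fintype n]
    [DecidableEq m] (f : R →+* S) (A : Matrix m n R) (B : Matrix n m R) :
    (1 + A * B).map f = 1 + A.map f * B.map f := by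
  rw [Matrix.map_add f (map_add f), Matrix.map_one _ f.map_zero f.map_one, Matrix.map_mul]

section EnergyGrowth

variable {n : Type*} [Fintype n] {M D S : Matrix n n ℝ}

theorem Matrix.PosSemidef.dotProduct_mulVec_comm (hM : M.PosSemidef) (u v : n → ℝ) :
    u ⬝ᵥ M *ᵥ v = v ⬝ᵥ M *ᵥ u := by
  rw [dotProduct_mulVec, ← mulVec_transpose, ← conjTranspose_eq_transpose_of_trivial,
    hM.isHermitian.eq, dotProduct_comm]

/- With `y = S x`: `yᵀ M y - xᵀ M x = (y - x)ᵀ M (y - x) + 2 xᵀ D x`. -/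
theorem Matrix.dotProduct_mulVec_lt_of_mul_eq_add (hM : M.PosSemidef) (hD : D.PosDef)
    (hS : M * S = M + D) {x : n → ℝ} (hx : x ≠ 0) :
    x ⬝ᵥ M *ᵥ x < S *ᵥ x ⬝ᵥ M *ᵥ (S *ᵥ x) := by
  set y := S *ᵥ x
  have hMy : M *ᵥ y = M *ᵥ x + D *ᵥ x := by rw [mulVec_mulVec, hS, add_mulVec]
  have hdiff : 0 ≤ (y - x) ⬝ᵥ M *ᵥ (y - x) := by
    simpa using hM.dotProduct_mulVec_nonneg (y - x)
  have hDx : 0 < x ⬝ᵥ D *ᵥ x := by simpa using hD.dotProduct_mulVec_pos hx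
  have hcross : x ⬝ᵥ M *ᵥ y = x ⬝ᵥ M *ᵥ x + x ⬝ᵥ D *ᵥ x := by rw [hMy, dotProduct_add]
  have hexpand : (y - x) ⬝ᵥ M *ᵥ (y - x)
      = y ⬝ᵥ M *ᵥ y - y ⬝ᵥ M *ᵥ x - x ⬝ᵥ M *ᵥ y + x ⬝ᵥ M *ᵥ x := by
    simp only [mulVec_sub, sub_dotProduct, dotProduct_sub]
    ring
  linarith [hM.dotProduct_mulVec_comm y x]

variable [DecidableEq n]

theorem Matrix.dotProduct_mulVec_lt_of_mul_eq_add_pow (hM : M.PosSemidef) (hD : D.PosDef)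
    (hS : M * S = M + D) {x : n → ℝ} (hx : x ≠ 0) {k : ℕ} (hk : 0 < k) :
    x ⬝ᵥ M *ᵥ x < S ^ k *ᵥ x ⬝ᵥ M *ᵥ (S ^ k *ᵥ x) := by
  induction k, hk using Nat.le_induction with
  | base => simpa using dotProduct_mulVec_lt_of_mul_eq_add hM hD hS hx
  | succ k hk ih =>
    have hne : S ^ k *ᵥ x ≠ 0 := by
      rintro h
      rw [h, mulVec_zero, dotProduct_zero] at ih
      linarith [by simpa using hM.dotProduct_mulVec_nonneg x]
    rw [pow_succ', ← mulVec_mulVec]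
    exact ih.trans (dotProduct_mulVec_lt_of_mul_eq_add hM hD hS hne)

theorem Matrix.eq_zero_of_pow_mulVec_eq_smul (hM : M.PosSemidef) (hD : D.PosDef)
    (hS : M * S = M + D) {k : ℕ} (hk : 0 < k) {ε : ℝ} (hε : |ε| ≤ 1) {x : n → ℝ}
    (hx : S ^ k *ᵥ x = ε • x) : x = 0 := by
  by_contra hx0
  have hlt := dotProduct_mulVec_lt_of_mul_eq_add_pow hM hD hS hx0 hk
  have hq : 0 ≤ x ⬝ᵥ M *ᵥ x := by simpa using hM.dotProduct_mulVec_nonneg x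
  have hε2 : ε ^ 2 ≤ 1 := by nlinarith [abs_nonneg ε, sq_abs ε]
  rw [hx, mulVec_smul, smul_dotProduct, dotProduct_smul, smul_eq_mul, smul_eq_mul] at hlt
  nlinarith

theorem Matrix.isUnit_det_pow_sub_smul_one (hM : M.PosSemidef) (hD : D.PosDef)
    (hS : M * S = M + D) {k : ℕ} (hk : 0 < k) {ε : ℝ} (hε : |ε| ≤ 1) :
    IsUnit (S ^ k - ε • (1 : Matrix n n ℝ)).det := by
  rw [isUnit_iff_ne_zero, Ne, ← exists_mulVec_eq_zero_iff]
  rintro ⟨x, hx0, hx⟩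
  rw [sub_mulVec, smul_mulVec, one_mulVec, sub_eq_zero] at hx
  exact hx0 (eq_zero_of_pow_mulVec_eq_smul hM hD hS hk hε hx)

end EnergyGrowth

section Blocks

variable {N J : ℕ} {A₀ M : Matrix (Fin J) (Fin J) ℝ} (v : Fin N × Fin J → ℝ) (x : Fin J)

theorem Lmat_mulVec_apply (k : Fin N) :
    (Lmat N J A₀ M *ᵥ v) (k, x) = (A₀ *ᵥ Function.curry v k) x
      - ∑ j : Fin N, if (k : ℕ) = j + 1 then (M *ᵥ Function.curry v j) x else 0 := by
  have hblock : ∀ j : Fin N, ∑ y, Lmat N J A₀ M (k, x) (j, y) * v (j, y) =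
      (if k = j then (A₀ *ᵥ Function.curry v j) x else 0)
        - if (k : ℕ) = j + 1 then (M *ᵥ Function.curry v j) x else 0 := by
    intro j
    by_cases hkj : k = j
    · subst hkj
      simp [Lmat, mulVec, dotProduct]
    · by_cases hsucc : (k : ℕ) = j + 1
      · simp [Lmat, mulVec, dotProduct, hkj, hsucc]
      · simp [Lmat, hkj, hsucc]
  rw [mulVec, dotProduct, Fintype.sum_prod_type, Finset.sum_congr rfl fun j _ => hblock j,
    Finset.sum_sub_distrib, Finset.sum_ite_eq]
  simp

theorem Emat_transpose_mulVec (i : Fin N) : (Emat N J i)ᵀ *ᵥ v = Function.curry v i := by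
  ext y
  simp [mulVec, dotProduct, Fintype.sum_prod_type, Emat, ite_and]

theorem Emat_transpose_mul {ι : Type*} (i : Fin N) (Y : Matrix (Fin N × Fin J) ι ℝ) :
    (Emat N J i)ᵀ * Y = Matrix.of fun x y => Y (i, x) y := by
  ext x y
  simp [mul_apply, Fintype.sum_prod_type, Emat, ite_and]

theorem Emat_mulVec_apply (i k : Fin N) (u : Fin J → ℝ) :
    (Emat N J i *ᵥ u) (k, x) = if k = i then u x else 0 := by
  simp [mulVec, dotProduct, Emat, ite_and]

variable (hN : 0 < N) {ε : ℝ}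

theorem Pmat_mulVec_apply (k : Fin N) :
    (Pmat N J hN A₀ M ε *ᵥ v) (k, x) = (Lmat N J A₀ M *ᵥ v) (k, x)
      - if k = ⟨0, hN⟩ then
          ε * (M *ᵥ Function.curry v ⟨N - 1, Nat.sub_lt hN Nat.one_pos⟩) x else 0 := by
  simp only [Pmat, sub_mulVec, smul_mulVec, ← mulVec_mulVec, Emat_transpose_mulVec,
    Pi.sub_apply, Pi.smul_apply, Emat_mulVec_apply, smul_eq_mul, mul_ite, mul_zero]

theorem Pmat_mulVec_apply_zero :
    (Pmat N J hN A₀ M ε *ᵥ v) (⟨0, hN⟩, x) =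
      (A₀ *ᵥ Function.curry v ⟨0, hN⟩
        - ε • M *ᵥ Function.curry v ⟨N - 1, Nat.sub_lt hN Nat.one_pos⟩) x := by
  simp [Pmat_mulVec_apply, Lmat_mulVec_apply]

theorem Pmat_mulVec_apply_of_val_eq_succ {k j : Fin N} (hkj : (k : ℕ) = j + 1) :
    (Pmat N J hN A₀ M ε *ᵥ v) (k, x) =
      (A₀ *ᵥ Function.curry v k - M *ᵥ Function.curry v j) x := by
  have hk : k ≠ ⟨0, hN⟩ := fun h => by simp [h] at hkj
  rw [Pmat_mulVec_apply, Lmat_mulVec_apply, if_neg hk, sub_zero,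
    Finset.sum_eq_single j (fun i _ hi => if_neg (by omega)) (by simp), if_pos hkj]
  rfl

variable {S : Matrix (Fin J) (Fin J) ℝ}

/- The blocks of a kernel vector satisfy `w_j = S w_(j+1)` and `S w_0 = ε w_(N-1)`,
so `w_(N-1)` lies in the kernel of `S^N - ε I`. -/
theorem isUnit_det_Pmat (hS : M * S = A₀) (hM : IsUnit M)
    (hW : IsUnit (S ^ N - ε • (1 : Matrix (Fin J) (Fin J) ℝ)).det) :
    IsUnit (Pmat N J hN A₀ M ε).det := by
  rw [isUnit_iff_ne_zero, Ne, ← exists_mulVec_eq_zero_iff]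
  rintro ⟨v, hv0, hv⟩
  set w := Function.curry v
  set last : Fin N := ⟨N - 1, Nat.sub_lt hN Nat.one_pos⟩
  have hA₀ : ∀ u, A₀ *ᵥ u = M *ᵥ (S *ᵥ u) := by simp [mulVec_mulVec, hS]
  have hstep : ∀ k j : Fin N, (k : ℕ) = j + 1 → S *ᵥ w k = w j := fun k j hkj =>
    mulVec_injective_iff_isUnit.2 hM <| by
      rw [← hA₀, ← sub_eq_zero]
      ext x
      rw [← Pmat_mulVec_apply_of_val_eq_succ v x hN hkj, hv]
      rfl
  have hwrap : S *ᵥ w ⟨0, hN⟩ = ε • w last :=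
    mulVec_injective_iff_isUnit.2 hM <| by
      rw [← hA₀, mulVec_smul, ← sub_eq_zero]
      ext x
      rw [← Pmat_mulVec_apply_zero v x hN, hv]
      rfl
  have hdown : ∀ d (j : Fin N), (j : ℕ) + d = N - 1 → S ^ d *ᵥ w last = w j := by
    intro d
    induction d with
    | zero => intro j hj; simp [show j = last from Fin.ext (by simpa using hj)]
    | succ d ih =>
      intro j hj
      rw [pow_succ', ← mulVec_mulVec, ih ⟨j + 1, by omega⟩ (by simp; omega), hstep _ _ rfl]
  have hlast : w last = 0 := by
    refine mulVec_injective_iff_isUnit.2 ((isUnit_iff_isUnit_det _).2 hW) ?_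
    have hpow : S ^ N = S * S ^ (N - 1) := by rw [← pow_succ', Nat.sub_add_cancel hN]
    rw [mulVec_zero, sub_mulVec, smul_mulVec, one_mulVec, sub_eq_zero, hpow, ← mulVec_mulVec,
      hdown _ ⟨0, hN⟩ (zero_add _), hwrap]
  apply hv0
  ext ⟨k, x⟩
  have hk := hdown (N - 1 - k) k (by omega)
  rw [hlast, mulVec_zero] at hk
  exact (congrFun hk x).symm

theorem Pmat_mul_eq_Emat (hS : M * S = A₀) {C : Matrix (Fin J) (Fin J) ℝ}
    (hC : M * (S ^ N - ε • (1 : Matrix (Fin J) (Fin J) ℝ)) * C = 1) :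
    Pmat N J hN A₀ M ε *
        (Matrix.of fun p y => (S ^ (N - 1 - p.1) * C) p.2 y : Matrix (Fin N × Fin J) (Fin J) ℝ) =
      Emat N J ⟨0, hN⟩ := by
  ext ⟨⟨k, hk⟩, x⟩ y
  change (Pmat N J hN A₀ M ε *ᵥ fun p => (S ^ (N - 1 - p.1) * C) p.2 y) (⟨k, hk⟩, x) = _
  cases k with
  | zero =>
    rw [Pmat_mulVec_apply_zero]
    have hblock : A₀ * (S ^ (N - 1 - 0) * C) - ε • (M * (S ^ (N - 1 - (N - 1)) * C)) = 1 := by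
      rw [← hC, ← hS, Nat.sub_zero, Nat.sub_self, pow_zero, Matrix.one_mul, Matrix.mul_sub,
        Matrix.sub_mul, Matrix.mul_smul, Matrix.mul_one, Matrix.smul_mul, Matrix.mul_assoc M,
        ← Matrix.mul_assoc S, ← pow_succ', Nat.sub_add_cancel hN, Matrix.mul_assoc]
    change (A₀ * (S ^ (N - 1 - 0) * C) - ε • (M * (S ^ (N - 1 - (N - 1)) * C))) x y = _
    rw [hblock]
    simp [Emat, one_apply]
  | succ j =>
    rw [Pmat_mulVec_apply_of_val_eq_succ (j := ⟨j, by omega⟩) _ x hN rfl]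
    have hblock : A₀ * (S ^ (N - 1 - (j + 1)) * C) - M * (S ^ (N - 1 - j) * C) = 0 := by
      rw [show N - 1 - j = N - 1 - (j + 1) + 1 by omega, pow_succ', ← hS]
      simp only [Matrix.mul_assoc, sub_self]
    change (A₀ * (S ^ (N - 1 - (j + 1)) * C) - M * (S ^ (N - 1 - j) * C)) x y = _
    rw [hblock]
    simp [Emat]

theorem Emat_transpose_mul_inv_Pmat_mul_Emat_mul (hS : M * S = A₀) (hM : IsUnit M)
    (hW : IsUnit (S ^ N - ε • (1 : Matrix (Fin J) (Fin J) ℝ)).det) :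
    (Emat N J ⟨N - 1, Nat.sub_lt hN Nat.one_pos⟩)ᵀ * (Pmat N J hN A₀ M ε)⁻¹ *
        Emat N J ⟨0, hN⟩ * M =
      (S ^ N - ε • (1 : Matrix (Fin J) (Fin J) ℝ))⁻¹ := by
  have hMdet := (isUnit_iff_isUnit_det M).1 hM
  have hC : M * (S ^ N - ε • 1) * ((S ^ N - ε • 1)⁻¹ * M⁻¹) = 1 := by
    rw [Matrix.mul_assoc, mul_nonsing_inv_cancel_left _ _ hW, mul_nonsing_inv _ hMdet]
  rw [Matrix.mul_assoc _ _ (Emat N J _), ← Pmat_mul_eq_Emat hN hS hC,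
    nonsing_inv_mul_cancel_left _ _ (isUnit_det_Pmat hN hS hM hW), Emat_transpose_mul]
  convert nonsing_inv_mul_cancel_right _ _ hMdet using 2
  ext x y
  simp

end Blocks

/-- For `N ≥ 2` and every `ε ∈ (0,1]`, the spectrum (over `ℂ`)
of `P_ε⁻¹ L` equals `{1} ∪ σ(I_J + ε ((M⁻¹A₀)^N − ε I_J)⁻¹)`. -/
theorem statement9 (N J : ℕ) (hN : 0 < N) (hN2 : 2 ≤ N) (hJ : 0 < J)
    (τ : ℝ) (hτ : 0 < τ)
    (M K : Matrix (Fin J) (Fin J) ℝ) (hM : M.PosDef) (hK : K.PosDef)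
    (A₀ : Matrix (Fin J) (Fin J) ℝ) (hA₀ : A₀ = M + τ • K)
    (ε : ℝ) (hε0 : 0 < ε) (hε1 : ε ≤ 1)
    (G : Matrix (Fin J) (Fin J) ℝ)
    (hG : G = 1 + ε • ((M⁻¹ * A₀) ^ N - ε • (1 : Matrix (Fin J) (Fin J) ℝ))⁻¹) :
    spectrum ℂ (((Pmat N J hN A₀ M ε)⁻¹ * Lmat N J A₀ M).map Complex.ofReal) =
      {1} ∪ spectrum ℂ (G.map Complex.ofReal) := by
  set S := M⁻¹ * A₀
  set P := Pmat N J hN A₀ M ε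
  set E₀ := Emat N J ⟨0, hN⟩
  set Eₗ := Emat N J ⟨N - 1, Nat.sub_lt hN Nat.one_pos⟩
  have hS : M * S = A₀ :=
    mul_nonsing_inv_cancel_left _ _ ((isUnit_iff_isUnit_det M).1 hM.isUnit)
  have hW : IsUnit (S ^ N - ε • (1 : Matrix (Fin J) (Fin J) ℝ)).det :=
    isUnit_det_pow_sub_smul_one hM.posSemidef (hK.smul hτ) (hS.trans hA₀) hN
      (abs_le.2 ⟨by linarith, hε1⟩)
  have hL : P⁻¹ * Lmat N J A₀ M = 1 + (ε • (P⁻¹ * E₀ * M)) * Eₗᵀ := by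
    have hLP : Lmat N J A₀ M = P + ε • (E₀ * M * Eₗᵀ) := (sub_add_cancel _ _).symm
    rw [hLP, Matrix.mul_add, nonsing_inv_mul _ (isUnit_det_Pmat hN hS hM.isUnit hW),
      Matrix.mul_smul, Matrix.smul_mul]
    simp only [Matrix.mul_assoc]
  have hG' : G = 1 + Eₗᵀ * (ε • (P⁻¹ * E₀ * M)) := by
    rw [hG, Matrix.mul_smul, ← Matrix.mul_assoc, ← Matrix.mul_assoc,
      Emat_transpose_mul_inv_Pmat_mul_Emat_mul hN hS hM.isUnit hW]
  have hcard : Fintype.card (Fin J) < Fintype.card (Fin N × Fin J) := by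
    simp only [Fintype.card_prod, Fintype.card_fin]
    nlinarith
  have h := spectrum_one_add_mul ((ε • (P⁻¹ * E₀ * M)).map Complex.ofRealHom)
    (Eₗᵀ.map Complex.ofRealHom) hcard
  rw [← map_one_add_mul, ← map_one_add_mul] at h
  rwa [hL, hG']
end

section
/- For every ε ∈ (0,1], the matrix P_ε⁻¹L is diagonalizable over ℝ: there exist an invertible matrix V̂ ∈ ℝ^{NJ×NJ} and a diagonal matrix D̂ ∈ ℝ^{NJ×NJ} such that P_ε⁻¹L = V̂ D̂ V̂⁻¹, where exactly (N−1)J of the diagonal entries of D̂ equal 1 and the remaining J diagonal entries are strictly greater than 1. -/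
/-!
`P_ε` differs from `L` only in its corner block, so `P_ε⁻¹ L = 1 + ε P_ε⁻¹ E₁ M E_Nᵀ` is a
rank-`J` perturbation of the identity. Since `M > 0` and `A₀ - M = τK > 0`, the pencil `(M, A₀)`
is diagonalisable, `M W = A₀ W Λ` with `0 < Λ < 1`; in these coordinates `P_ε X = 0` forces
`X₀ = εΛ^N X₀`, so `P_ε` is invertible as `εΛ^N < 1`. The block column with blocks
`W Λ^i (1 - εΛ^N)⁻¹ Λ` solves `P_ε Z = E₁ M W`, hence `E_Nᵀ (ε P_ε⁻¹ E₁ M) W = W Δ` with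
`Δ = εΛ^N (1 - εΛ^N)⁻¹ > 0`. A perturbation `1 + a b` for which `b a` is diagonalisable is itself
diagonalisable, with eigenvalue `1` on the kernel of `b` and `1 + Δ` on the range of `a`.
-/

open Matrix

theorem Matrix.PosDef.exists_generalizedEigenbasis {n : Type*} [Fintype n] [DecidableEq n]
    {A M : Matrix n n ℝ} (hM : M.PosDef) (hAM : (A - M).PosDef) :
    ∃ (W : Matrix n n ℝ) (μ : n → ℝ), IsUnit W ∧ M * W = A * W * diagonal μ ∧
      ∀ k, 0 < μ k ∧ μ k < 1 := by
  -- With `R = A^{1/2}`, both `S = R⁻¹ M R⁻¹` and `1 - S = R⁻¹ (A - M) R⁻¹` are positive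
  -- definite, and `W = R⁻¹ U` for an orthonormal eigenbasis `U` of `S`.
  have hA : A.PosDef := by simpa using hM.add hAM
  obtain ⟨R, hRR, hRH⟩ : ∃ R : Matrix n n ℝ, R * R = A ∧ Rᴴ = R :=
    open scoped MatrixOrder in ⟨CFC.sqrt A, CFC.sqrt_mul_sqrt_self A hA.posSemidef.nonneg,
      (CFC.sqrt_nonneg A).posSemidef.isHermitian⟩
  have hR : IsUnit R := by
    rw [isUnit_iff_isUnit_det]
    exact isUnit_of_mul_isUnit_left (by rw [← det_mul, hRR]; exact hA.isUnit.map detMonoidHom)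
  have hRdet : IsUnit R.det := (isUnit_iff_isUnit_det R).mp hR
  set S := R⁻¹ * M * R⁻¹ with hS_def
  have hRi : IsUnit R⁻¹ := isUnit_nonsing_inv_iff.mpr hR
  have hRiH : R⁻¹ᴴ = R⁻¹ := by rw [conjTranspose_nonsing_inv, hRH]
  have hS : S.PosDef := by
    have h := hM.conjTranspose_mul_mul_same (mulVec_injective_of_isUnit hRi)
    rwa [hRiH] at h
  have h1S : (1 - S).PosDef := by
    have h := hAM.conjTranspose_mul_mul_same (mulVec_injective_of_isUnit hRi)
    rwa [hRiH, mul_sub, sub_mul, ← hRR, ← mul_assoc, nonsing_inv_mul _ hRdet, one_mul,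
      mul_nonsing_inv _ hRdet] at h
  set U : Matrix n n ℝ := (hS.1.eigenvectorUnitary : Matrix n n ℝ)
  set μ := hS.1.eigenvalues
  have hU : U * star U = 1 := Unitary.mul_star_self_of_mem hS.1.eigenvectorUnitary.2
  have hSU : S = U * diagonal μ * star U := by
    simpa [Function.comp_def] using hS.1.spectral_theorem
  refine ⟨R⁻¹ * U, μ, hRi.mul Unitary.isUnit_coe, ?_, fun k => ⟨hS.eigenvalues_pos k, ?_⟩⟩
  · have hUU : star U * U = 1 := Unitary.star_mul_self_of_mem hS.1.eigenvectorUnitary.2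
    calc M * (R⁻¹ * U) = R * S * U := by
          simp only [hS_def, mul_assoc, mul_nonsing_inv_cancel_left _ _ hRdet]
      _ = R * U * diagonal μ := by simp only [hSU, mul_assoc, hUU, mul_one]
      _ = A * (R⁻¹ * U) * diagonal μ := by
          simp only [← hRR, mul_assoc, mul_nonsing_inv_cancel_left _ _ hRdet]
  · have hD : diagonal (1 - μ) = 1 - diagonal μ := by rw [← diagonal_one, diagonal_sub]; rfl
    have : (U * diagonal (1 - μ) * star U).PosDef := by
      rwa [hD, mul_sub, sub_mul, mul_one, hU, ← hSU]
    simpa using posDef_diagonal_iff.mp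
      ((IsUnit.posDef_star_right_conjugate_iff Unitary.isUnit_coe).mp this) k

theorem Matrix.exists_one_add_mul_eq_conj_diagonal {m n R : Type*} [Fintype m] [Fintype n]
    [DecidableEq m] [DecidableEq n] [CommRing R] {a E : Matrix n m R} {b : Matrix m n R}
    {W : Matrix m m R} {d : m → R} (hbE : b * E = 1) (hbaW : b * a * W = W * diagonal d)
    (hW : IsUnit W) (hd : IsUnit d) :
    ∃ V : Matrix n n R, IsUnit V ∧ 1 + a * b = V * (1 + E * diagonal d * b) * V⁻¹ := by
  -- `V` fixes the kernel of `b` and maps `E` to the eigenvectors `a * W` of `a * b`;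
  -- `det V = det (W * diagonal d)` by Sylvester's determinant identity.
  set V := 1 + (a * W - E) * b
  have hV : IsUnit V.det := by
    have := (isUnit_iff_isUnit_det _).mp (hW.mul (isUnit_diagonal.mpr hd))
    rwa [det_one_add_mul_comm, Matrix.mul_sub, ← Matrix.mul_assoc, hbaW, hbE, add_sub_cancel]
  have hbV : b * V = W * diagonal d * b := by
    rw [Matrix.mul_add, Matrix.mul_one, ← Matrix.mul_assoc, Matrix.mul_sub, ← Matrix.mul_assoc,
      hbaW, hbE, Matrix.sub_mul, Matrix.one_mul, add_sub_cancel]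
  have hVE : V * E = a * W := by
    rw [Matrix.add_mul, Matrix.one_mul, Matrix.mul_assoc, hbE, Matrix.mul_one, add_sub_cancel]
  have hAV : (1 + a * b) * V = V * (1 + E * diagonal d * b) := by
    rw [Matrix.add_mul, Matrix.one_mul, Matrix.mul_assoc, hbV, Matrix.mul_add, Matrix.mul_one]
    simp only [← Matrix.mul_assoc, hVE]
  refine ⟨V, (isUnit_iff_isUnit_det V).mpr hV, ?_⟩
  rw [← hAV, Matrix.mul_nonsing_inv_cancel_right _ _ hV]

section Counting

variable {ι κ : Type*} [Fintype ι] [Fintype κ] [DecidableEq ι] (i₀ : ι) {d : κ → ℝ}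

lemma card_filter_ite_fst_eq_one (hd : ∀ k, 0 < d k) :
    (Finset.univ.filter fun p : ι × κ => (if p.1 = i₀ then 1 + d p.2 else 1) = 1).card =
      (Fintype.card ι - 1) * Fintype.card κ := by
  have : (Finset.univ.filter fun p : ι × κ => (if p.1 = i₀ then 1 + d p.2 else 1) = 1) =
      (Finset.univ.erase i₀) ×ˢ Finset.univ := by
    ext ⟨i, k⟩
    rcases eq_or_ne i i₀ with rfl | h <;> simp [*, Ne.symm, (hd k).ne']
  rw [this, Finset.card_product, Finset.card_erase_of_mem (Finset.mem_univ _), Finset.card_univ,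
    Finset.card_univ]

lemma card_filter_one_lt_ite_fst (hd : ∀ k, 0 < d k) :
    (Finset.univ.filter fun p : ι × κ => 1 < if p.1 = i₀ then 1 + d p.2 else 1).card =
      Fintype.card κ := by
  have : (Finset.univ.filter fun p : ι × κ => 1 < if p.1 = i₀ then 1 + d p.2 else 1) =
      {i₀} ×ˢ Finset.univ := by
    ext ⟨i, k⟩
    rcases eq_or_ne i i₀ with rfl | h <;> simp [*, Ne.symm, hd k]
  rw [this, Finset.card_product, Finset.card_singleton, one_mul, Finset.card_univ]

end Counting

def blockCol {N J : ℕ} {ι : Type*} (X : Fin N → Matrix (Fin J) ι ℝ) :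
    Matrix (Fin N × Fin J) ι ℝ :=
  Matrix.of fun p z => X p.1 p.2 z

section Blocks

variable {N J : ℕ} {ι : Type*}

lemma mul_blockCol_apply (P : Matrix (Fin N × Fin J) (Fin N × Fin J) ℝ)
    (X : Fin N → Matrix (Fin J) ι ℝ) (i : Fin N) (y : Fin J) (z : ι) :
    (P * blockCol X) (i, y) z = (∑ j, P.submatrix (Prod.mk i) (Prod.mk j) * X j) y z := by
  simp [mul_apply, Fintype.sum_prod_type, blockCol, Matrix.sum_apply]

lemma Pmat_submatrix (hN : 0 < N) (A₀ M : Matrix (Fin J) (Fin J) ℝ) (ε : ℝ) (i j : Fin N) :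
    (Pmat N J hN A₀ M ε).submatrix (Prod.mk i) (Prod.mk j) =
      (if i = j then A₀ else if (i : ℕ) = j + 1 then -M else 0) -
        if i = ⟨0, hN⟩ ∧ j = ⟨N - 1, Nat.sub_lt hN Nat.one_pos⟩ then ε • M else 0 := by
  ext y w
  simp [Pmat, Lmat, Emat, mul_apply, ite_and,
    apply_ite (fun A : Matrix (Fin J) (Fin J) ℝ => A y w)]
  split_ifs <;> rfl

lemma Pmat_submatrix_mul (hN : 0 < N) (A₀ M : Matrix (Fin J) (Fin J) ℝ) (ε : ℝ) (i j : Fin N)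
    (Y : Matrix (Fin J) ι ℝ) :
    (Pmat N J hN A₀ M ε).submatrix (Prod.mk i) (Prod.mk j) * Y =
      (if i = j then A₀ * Y else if (i : ℕ) = j + 1 then -(M * Y) else 0) -
        if i = ⟨0, hN⟩ ∧ j = ⟨N - 1, Nat.sub_lt hN Nat.one_pos⟩ then ε • (M * Y) else 0 := by
  rw [Pmat_submatrix, Matrix.sub_mul]
  split_ifs <;> simp

lemma Pmat_mul_blockCol_zero (hN : 0 < N) (A₀ M : Matrix (Fin J) (Fin J) ℝ) (ε : ℝ)
    (X : Fin N → Matrix (Fin J) ι ℝ) (y : Fin J) (z : ι) :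
    (Pmat N J hN A₀ M ε * blockCol X) (⟨0, hN⟩, y) z =
      (A₀ * X ⟨0, hN⟩ - ε • (M * X ⟨N - 1, Nat.sub_lt hN Nat.one_pos⟩)) y z := by
  simp [mul_blockCol_apply, Pmat_submatrix_mul, Finset.sum_sub_distrib]

lemma Pmat_mul_blockCol_succ (hN : 0 < N) (A₀ M : Matrix (Fin J) (Fin J) ℝ) (ε : ℝ)
    (X : Fin N → Matrix (Fin J) ι ℝ) {i : ℕ} (hi : i + 1 < N) (y : Fin J) (z : ι) :
    (Pmat N J hN A₀ M ε * blockCol X) (⟨i + 1, hi⟩, y) z =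
      (A₀ * X ⟨i + 1, hi⟩ - M * X ⟨i, by omega⟩) y z := by
  rw [mul_blockCol_apply, Fintype.sum_eq_add ⟨i + 1, hi⟩ ⟨i, by omega⟩ (by simp [Fin.ext_iff])]
  · simp [Pmat_submatrix_mul, sub_eq_add_neg]
  · rintro j ⟨hj₁, hj₂⟩
    simp [Pmat_submatrix_mul, Ne.symm hj₁, Fin.ext_iff] at hj₂ ⊢
    omega

lemma Emat_eq_blockCol (i : Fin N) :
    Emat N J i = blockCol fun j => if j = i then 1 else 0 := by
  ext p y
  by_cases h : p.1 = i <;> simp [Emat, blockCol, h, one_apply]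

lemma Emat_mul_apply (i : Fin N) (Y : Matrix (Fin J) ι ℝ) (p : Fin N × Fin J) (z : ι) :
    (Emat N J i * Y) p z = if p.1 = i then Y p.2 z else 0 := by
  simp [Emat, mul_apply, ite_and]

lemma Emat_transpose_mul_blockCol (i : Fin N) (X : Fin N → Matrix (Fin J) ι ℝ) :
    (Emat N J i)ᵀ * blockCol X = X i := by
  ext y z
  simp [Emat, blockCol, mul_apply, Fintype.sum_prod_type, ite_and]

lemma Emat_transpose_mul_Emat (i : Fin N) : (Emat N J i)ᵀ * Emat N J i = 1 := by
  have h := Emat_transpose_mul_blockCol (J := J) (ι := Fin J) i fun j => if j = i then 1 else 0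
  rwa [← Emat_eq_blockCol, if_pos rfl] at h

lemma one_add_Emat_mul_diagonal_mul_transpose (i : Fin N) (d : Fin J → ℝ) :
    1 + Emat N J i * diagonal d * (Emat N J i)ᵀ =
      diagonal fun p => if p.1 = i then 1 + d p.2 else 1 := by
  ext ⟨i₁, y₁⟩ ⟨i₂, y₂⟩
  rw [Matrix.add_apply, mul_apply]
  rcases eq_or_ne i₁ i with rfl | h₁ <;> rcases eq_or_ne i₂ i₁ with rfl | h₂ <;>
    rcases eq_or_ne y₁ y₂ with rfl | hy <;>
    simp [Emat, one_apply, ite_and, *, Ne.symm]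

lemma Pmat_inv_mul_Lmat (hN : 0 < N) {A₀ M : Matrix (Fin J) (Fin J) ℝ} {ε : ℝ}
    (hP : IsUnit (Pmat N J hN A₀ M ε)) :
    (Pmat N J hN A₀ M ε)⁻¹ * Lmat N J A₀ M =
      1 + ε • ((Pmat N J hN A₀ M ε)⁻¹ * Emat N J ⟨0, hN⟩ * M) *
        (Emat N J ⟨N - 1, Nat.sub_lt hN Nat.one_pos⟩)ᵀ := by
  have hLP : Lmat N J A₀ M = Pmat N J hN A₀ M ε +
      ε • (Emat N J ⟨0, hN⟩ * M * (Emat N J ⟨N - 1, Nat.sub_lt hN Nat.one_pos⟩)ᵀ) :=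
    (sub_add_cancel _ _).symm
  rw [hLP, Matrix.mul_add, nonsing_inv_mul _ ((isUnit_iff_isUnit_det _).mp hP)]
  simp only [Matrix.mul_smul, Matrix.smul_mul, Matrix.mul_assoc]

end Blocks

section Eigenbasis

variable {N J : ℕ} {A₀ M W : Matrix (Fin J) (Fin J) ℝ} {μ : Fin J → ℝ} {ε : ℝ}

lemma eq_zero_of_Pmat_mul_blockCol_eq_zero {ι : Type*} (hN : 0 < N) (hA : IsUnit A₀)
    (hW : IsUnit W) (hMW : M * W = A₀ * W * diagonal μ) (hμ : ∀ k, ε * μ k ^ N ≠ 1)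
    {X : Fin N → Matrix (Fin J) ι ℝ} (hX : Pmat N J hN A₀ M ε * blockCol X = 0) : X = 0 := by
  -- In the coordinates `X i = W * Y i` the block rows of `P X = 0` read
  -- `Y (i + 1) = Λ Y i` and `Y 0 = ε Λ^N Y 0`.
  have hWdet := (isUnit_iff_isUnit_det W).mp hW
  have hAWdet := (isUnit_iff_isUnit_det _).mp (hA.mul hW)
  set Y := fun i => W⁻¹ * X i
  have hXY : ∀ i, X i = W * Y i := fun i => (mul_nonsing_inv_cancel_left _ _ hWdet).symm
  have hMX : ∀ i, M * X i = A₀ * W * (diagonal μ * Y i) := fun i => by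
    rw [hXY, ← Matrix.mul_assoc, hMW, Matrix.mul_assoc]
  have hAX : ∀ i, A₀ * X i = A₀ * W * Y i := fun i => by rw [hXY, Matrix.mul_assoc]
  have hstep : ∀ i (hi : i + 1 < N), Y ⟨i + 1, hi⟩ = diagonal μ * Y ⟨i, by omega⟩ := by
    intro i hi
    have h : A₀ * X ⟨i + 1, hi⟩ - M * X ⟨i, by omega⟩ = 0 := by
      ext y z
      rw [← Pmat_mul_blockCol_succ hN, hX]; rfl
    rw [sub_eq_zero, hAX, hMX] at h
    simpa only [nonsing_inv_mul_cancel_left _ _ hAWdet] using congrArg ((A₀ * W)⁻¹ * ·) h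
  have hpow : ∀ i (hi : i < N), Y ⟨i, hi⟩ = diagonal (μ ^ i) * Y ⟨0, hN⟩ := by
    intro i hi
    induction i with
    | zero => simp
    | succ i ih =>
      rw [hstep i hi, ih, ← Matrix.mul_assoc, diagonal_mul_diagonal, pow_succ']
      rfl
  have hY₀ : Y ⟨0, hN⟩ = 0 := by
    have h : A₀ * X ⟨0, hN⟩ - ε • (M * X ⟨N - 1, Nat.sub_lt hN Nat.one_pos⟩) = 0 := by
      ext y z
      rw [← Pmat_mul_blockCol_zero hN, hX]; rfl
    rw [sub_eq_zero, hAX, hMX, hpow (N - 1), ← Matrix.mul_assoc (diagonal μ),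
      diagonal_mul_diagonal, ← Matrix.mul_smul] at h
    replace h := congrArg ((A₀ * W)⁻¹ * ·) h
    simp only [nonsing_inv_mul_cancel_left _ _ hAWdet] at h
    ext k z
    have hkz := congrFun (congrFun h k) z
    rw [Matrix.smul_apply, smul_eq_mul, diagonal_mul, Pi.pow_apply, ← pow_succ',
      Nat.sub_add_cancel hN] at hkz
    have : (1 - ε * μ k ^ N) * Y ⟨0, hN⟩ k z = 0 := by linear_combination hkz
    exact (mul_eq_zero.mp this).resolve_left (sub_ne_zero.mpr (hμ k).symm)
  funext i
  rw [hXY, hpow i i.isLt, hY₀, Matrix.mul_zero, Matrix.mul_zero]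
  rfl

lemma Pmat_isUnit (hN : 0 < N) (hA : IsUnit A₀) (hW : IsUnit W)
    (hMW : M * W = A₀ * W * diagonal μ) (hμ : ∀ k, ε * μ k ^ N ≠ 1) :
    IsUnit (Pmat N J hN A₀ M ε) := by
  rw [isUnit_iff_isUnit_det, isUnit_iff_ne_zero, Ne, ← exists_mulVec_eq_zero_iff]
  rintro ⟨v, hv, hPv⟩
  have hX := eq_zero_of_Pmat_mul_blockCol_eq_zero hN hA hW hMW hμ
    (X := fun i => of fun w (_ : Unit) => v (i, w)) (by
      ext p u
      simpa [mulVec, dotProduct, mul_apply, blockCol] using congrFun hPv p)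
  exact hv (funext fun p => congrFun (congrFun (congrFun hX p.1) p.2) ())

lemma Pmat_mul_blockCol_eigen (hN : 0 < N) (hMW : M * W = A₀ * W * diagonal μ) {g : Fin J → ℝ}
    (hg : ∀ k, (1 - ε * μ k ^ N) * g k = μ k) :
    Pmat N J hN A₀ M ε * blockCol (N := N) (fun i => W * diagonal (μ ^ (i : ℕ) * g)) =
      Emat N J ⟨0, hN⟩ * (M * W) := by
  have hM : ∀ f, M * (W * diagonal f) = A₀ * W * diagonal (μ * f) := fun f => by
    rw [← Matrix.mul_assoc, hMW, Matrix.mul_assoc, diagonal_mul_diagonal]; rfl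
  have hA : ∀ f, A₀ * (W * diagonal f) = A₀ * W * diagonal f := fun _ =>
    (Matrix.mul_assoc ..).symm
  refine Matrix.ext fun ⟨⟨i, hi⟩, y⟩ z => ?_
  rw [Emat_mul_apply]
  cases i with
  | zero =>
    rw [Pmat_mul_blockCol_zero, if_pos rfl, hM, hA, ← Matrix.mul_smul, ← Matrix.mul_sub,
      ← diagonal_smul, diagonal_sub, hMW]
    refine congrFun (congrFun (congrArg (A₀ * W * diagonal ·) (funext fun k => ?_)) y) z
    have hpow : μ k ^ N = μ k * μ k ^ (N - 1) := by rw [← pow_succ', Nat.sub_add_cancel hN]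
    simp only [Pi.smul_apply, Pi.mul_apply, Pi.pow_apply, smul_eq_mul]
    linear_combination hg k + ε * g k * hpow
  | succ i =>
    rw [Pmat_mul_blockCol_succ, if_neg (by simp [Fin.ext_iff]), hM, hA]
    simp [pow_succ', mul_assoc]

lemma Emat_transpose_mul_Pmat_inv_mul (hN : 0 < N) (hP : IsUnit (Pmat N J hN A₀ M ε))
    (hMW : M * W = A₀ * W * diagonal μ) {g : Fin J → ℝ}
    (hg : ∀ k, (1 - ε * μ k ^ N) * g k = μ k) :
    (Emat N J ⟨N - 1, Nat.sub_lt hN Nat.one_pos⟩)ᵀ *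
        (ε • ((Pmat N J hN A₀ M ε)⁻¹ * Emat N J ⟨0, hN⟩ * M)) * W =
      W * diagonal (ε • (μ ^ (N - 1) * g)) := by
  have hPdet := (isUnit_iff_isUnit_det _).mp hP
  simp only [Matrix.mul_smul, Matrix.smul_mul, Matrix.mul_assoc]
  rw [← Pmat_mul_blockCol_eigen hN hMW hg, nonsing_inv_mul_cancel_left _ _ hPdet,
    Emat_transpose_mul_blockCol, diagonal_smul, Matrix.mul_smul]

end Eigenbasis

theorem statement12_general (N J : ℕ) (hN : 0 < N) (τ : ℝ) (hτ : 0 < τ)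
    (M K : Matrix (Fin J) (Fin J) ℝ) (hM : M.PosDef) (hK : K.PosDef)
    (A₀ : Matrix (Fin J) (Fin J) ℝ) (hA₀ : A₀ = M + τ • K)
    (ε : ℝ) (hε0 : 0 < ε) (hε1 : ε ≤ 1) :
    ∃ V D : Matrix (Fin N × Fin J) (Fin N × Fin J) ℝ,
      IsUnit V ∧ D.IsDiag ∧
      (Pmat N J hN A₀ M ε)⁻¹ * Lmat N J A₀ M = V * D * V⁻¹ ∧
      (Finset.univ.filter fun i : Fin N × Fin J => D i i = 1).card = (N - 1) * J ∧
      (Finset.univ.filter fun i : Fin N × Fin J => 1 < D i i).card = J ∧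
      ∀ i : Fin N × Fin J, D i i = 1 ∨ 1 < D i i := by
  have hA₀M : (A₀ - M).PosDef := by rw [hA₀, add_sub_cancel_left]; exact hK.smul hτ
  obtain ⟨W, μ, hW, hMW, hμ⟩ := hM.exists_generalizedEigenbasis hA₀M
  have hA : IsUnit A₀ := (by simpa using hM.add hA₀M : A₀.PosDef).isUnit
  have hgap : ∀ k, 0 < 1 - ε * μ k ^ N := fun k => by
    have := pow_lt_one₀ (hμ k).1.le (hμ k).2 hN.ne'
    nlinarith [pow_pos (hμ k).1 N]
  have hP := Pmat_isUnit hN hA hW hMW fun k => (sub_pos.mp (hgap k)).ne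
  set last : Fin N := ⟨N - 1, Nat.sub_lt hN Nat.one_pos⟩
  set g : Fin J → ℝ := fun k => μ k / (1 - ε * μ k ^ N)
  set d : Fin J → ℝ := ε • (μ ^ (N - 1) * g)
  have hd : ∀ k, 0 < d k := fun k =>
    mul_pos hε0 (mul_pos (pow_pos (hμ k).1 _) (div_pos (hμ k).1 (hgap k)))
  obtain ⟨V, hV, hconj⟩ := exists_one_add_mul_eq_conj_diagonal (d := d)
    (Emat_transpose_mul_Emat last)
    (Emat_transpose_mul_Pmat_inv_mul hN hP hMW fun k => mul_div_cancel₀ _ (hgap k).ne') hW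
    (Pi.isUnit_iff.mpr fun k => (hd k).ne'.isUnit)
  refine ⟨V, _, hV, isDiag_diagonal _, by
    rw [Pmat_inv_mul_Lmat hN hP, hconj, one_add_Emat_mul_diagonal_mul_transpose], ?_, ?_,
    fun p => ?_⟩
  · simpa using card_filter_ite_fst_eq_one last hd
  · simpa using card_filter_one_lt_ite_fst last hd
  · by_cases h : p.1 = last <;> simp [h, hd p.2]

/-- For every `ε ∈ (0,1]`, `P_ε⁻¹ L` is diagonalizable over
`ℝ`: there exist an invertible `V̂` and a diagonal `D̂` with
`P_ε⁻¹ L = V̂ D̂ V̂⁻¹`, where exactly `(N−1)J` diagonal entries of `D̂` equal `1`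
and the remaining `J` diagonal entries are strictly greater than `1`. -/
theorem statement12 (N J : ℕ) (hN : 0 < N) (hJ : 0 < J) (τ : ℝ) (hτ : 0 < τ)
    (M K : Matrix (Fin J) (Fin J) ℝ) (hM : M.PosDef) (hK : K.PosDef)
    (A₀ : Matrix (Fin J) (Fin J) ℝ) (hA₀ : A₀ = M + τ • K)
    (ε : ℝ) (hε0 : 0 < ε) (hε1 : ε ≤ 1) :
    ∃ V D : Matrix (Fin N × Fin J) (Fin N × Fin J) ℝ,
      IsUnit V ∧ D.IsDiag ∧
      (Pmat N J hN A₀ M ε)⁻¹ * Lmat N J A₀ M = V * D * V⁻¹ ∧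
      (Finset.univ.filter fun i : Fin N × Fin J => D i i = 1).card = (N - 1) * J ∧
      (Finset.univ.filter fun i : Fin N × Fin J => 1 < D i i).card = J ∧
      ∀ i : Fin N × Fin J, D i i = 1 ∨ 1 < D i i :=
  statement12_general N J hN τ hτ M K hM hK A₀ hA₀ ε hε0 hε1
end
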